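/- For n ≥ 1 and 1 ≤ r < n, the graph G = K_r + complement(K_{n−r}) (the join of a clique on r vertices with an independent set on n−r vertices, i.e., the complete split graph) satisfies μ₁(G) = (r−1)/2 + √(nr − (3r² + 2r − 1)/4). -/

import Mathlib

/-!
Write `k = #K` and `m = #Kᶜ` for the clique and the independent part. If `A x = t x`, then
`a = ∑_K x` and `b = ∑_{Kᶜ} x` satisfy `(t + 1) a = k (a + b)` and `t b = m a`; for `t > 0`
the vector `x` is determined by `a` and `b`, so `a ≠ 0` and `t` is a root of
`t² = (k - 1) t + k m`. Every positive eigenvalue is therefore at most the larger root `μ`, and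
`μ` is attained by the vector equal to `m` on `K` and to `μ - k + 1` on `Kᶜ`.
-/

open Matrix SimpleGraph

/-- The eigenvalues of the adjacency matrix of `G`, in descending order:
`graphEig G i` is the `(i+1)`-th largest eigenvalue. -/
noncomputable def graphEig {n : ℕ} (G : SimpleGraph (Fin n)) (i : Fin n) : ℝ :=
  letI := Classical.decRel G.Adj
  letI hH : (G.adjMatrix ℝ).IsHermitian := by rw [Matrix.IsHermitian, conjTranspose_eq_transpose_of_trivial]; exact G.isSymm_adjMatrix
  hH.eigenvalues (Tuple.sort hH.eigenvalues i.rev)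

open Finset

theorem Tuple.isGreatest_range_apply_sort {α : Type*} [LinearOrder α] {n : ℕ} (f : Fin n → α)
    {i : Fin n} (hi : IsTop i) : IsGreatest (Set.range f) (f (Tuple.sort f i)) := by
  refine ⟨Set.mem_range_self _, ?_⟩
  rintro _ ⟨j, rfl⟩
  simpa using Tuple.monotone_sort f (hi ((Tuple.sort f).symm j))

theorem Matrix.mem_spectrum_iff_exists_mulVec_eq_smul {K n : Type*} [Field K] [Fintype n]
    [DecidableEq n] (A : Matrix n n K) (μ : K) :
    μ ∈ spectrum K A ↔ ∃ x : n → K, x ≠ 0 ∧ A *ᵥ x = μ • x := by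
  rw [← spectrum_toLin', ← Module.End.hasEigenvalue_iff_mem_spectrum]
  constructor
  · intro h
    obtain ⟨x, hx⟩ := h.exists_hasEigenvector
    exact ⟨x, hx.2, by simpa using hx.apply_eq_smul⟩
  · rintro ⟨x, hx0, hx⟩
    exact Module.End.hasEigenvalue_of_hasEigenvector
      ⟨Module.End.mem_eigenspace_iff.mpr (by rwa [toLin'_apply]), hx0⟩

theorem graphEig_zero_eq_of_isGreatest {n : ℕ} (G : SimpleGraph (Fin n)) [DecidableRel G.Adj]
    (hn : 0 < n) {μ : ℝ} (hμ : IsGreatest (spectrum ℝ (G.adjMatrix ℝ)) μ) :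
    graphEig G ⟨0, hn⟩ = μ := by
  have hH : (G.adjMatrix ℝ).IsHermitian := isHermitian_iff_isSymm.mpr G.isSymm_adjMatrix
  obtain rfl : ‹DecidableRel G.Adj› = Classical.decRel G.Adj := Subsingleton.elim _ _
  have htop : IsTop (Fin.rev ⟨0, hn⟩) := fun j => by
    rw [Fin.le_def, Fin.val_rev]; have := j.isLt; dsimp only; omega
  have := Tuple.isGreatest_range_apply_sort hH.eigenvalues htop
  rw [← hH.spectrum_real_eq_range_eigenvalues] at this
  exact this.unique hμ

theorem le_half_add_sqrt_of_sq_eq {p q t : ℝ} (h : t ^ 2 = p * t + q) :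
    t ≤ p / 2 + √(p ^ 2 / 4 + q) := by
  have hsq : p ^ 2 / 4 + q = (t - p / 2) ^ 2 := by linear_combination -h
  rw [hsq, Real.sqrt_sq_eq_abs]
  linarith [le_abs_self (t - p / 2)]

theorem half_add_sqrt_sq_eq {p q : ℝ} (h : 0 ≤ p ^ 2 / 4 + q) :
    (p / 2 + √(p ^ 2 / 4 + q)) ^ 2 = p * (p / 2 + √(p ^ 2 / 4 + q)) + q := by
  linear_combination Real.sq_sqrt h

section CompleteSplitGraph

variable {V : Type*} (K : Finset V)

def completeSplitGraph : SimpleGraph V :=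
  SimpleGraph.fromRel fun u v => u ∈ K ∨ v ∈ K

instance [DecidableEq V] : DecidableRel (completeSplitGraph K).Adj := fun u v =>
  inferInstanceAs (Decidable (u ≠ v ∧ ((u ∈ K ∨ v ∈ K) ∨ (v ∈ K ∨ u ∈ K))))

theorem completeSplitGraph_adj {u v : V} :
    (completeSplitGraph K).Adj u v ↔ u ≠ v ∧ (u ∈ K ∨ v ∈ K) := by
  simp only [completeSplitGraph, fromRel_adj]
  tauto

variable [Fintype V] [DecidableEq V] {K}

theorem completeSplitGraph_adjMatrix_mulVec_of_mem {R : Type*} [NonAssocRing R] (x : V → R)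
    {u : V} (hu : u ∈ K) :
    ((completeSplitGraph K).adjMatrix R *ᵥ x) u = ∑ v, x v - x u := by
  have : (completeSplitGraph K).neighborFinset u = univ.erase u := by
    ext v
    simp [completeSplitGraph_adj, ne_comm, hu]
  rw [adjMatrix_mulVec_apply, this, sum_erase_eq_sub (mem_univ u)]

theorem completeSplitGraph_adjMatrix_mulVec_of_notMem {R : Type*} [NonAssocRing R] (x : V → R)
    {u : V} (hu : u ∉ K) :
    ((completeSplitGraph K).adjMatrix R *ᵥ x) u = ∑ v ∈ K, x v := by
  have : (completeSplitGraph K).neighborFinset u = K := by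
    ext v
    simp only [mem_neighborFinset, completeSplitGraph_adj, hu, false_or]
    exact ⟨And.right, fun hv => ⟨fun h => hu (h ▸ hv), hv⟩⟩
  rw [adjMatrix_mulVec_apply, this]

theorem completeSplitGraph_apply_of_mulVec_eq_smul {R : Type*} [NonAssocRing R] {x : V → R}
    {t : R} (hx : (completeSplitGraph K).adjMatrix R *ᵥ x = t • x) :
    (∀ u ∈ K, (t + 1) * x u = ∑ v, x v) ∧ (∀ u ∉ K, t * x u = ∑ v ∈ K, x v) := by
  refine ⟨fun u hu => ?_, fun u hu => ?_⟩
  · have := congrFun hx u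
    rw [completeSplitGraph_adjMatrix_mulVec_of_mem x hu, Pi.smul_apply, smul_eq_mul] at this
    rw [add_mul, one_mul, ← this, sub_add_cancel]
  · have := congrFun hx u
    rwa [completeSplitGraph_adjMatrix_mulVec_of_notMem x hu, Pi.smul_apply, smul_eq_mul,
      eq_comm] at this

theorem completeSplitGraph_sq_eq_of_mulVec_eq_smul {F : Type*} [Field F] {x : V → F} {t : F}
    (hx0 : x ≠ 0) (hx : (completeSplitGraph K).adjMatrix F *ᵥ x = t • x) (ht : t ≠ 0)
    (ht' : t + 1 ≠ 0) : t ^ 2 = (#K - 1) * t + #K * #Kᶜ := by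
  obtain ⟨hK, hKc⟩ := completeSplitGraph_apply_of_mulVec_eq_smul hx
  set a := ∑ v ∈ K, x v
  set b := ∑ v ∈ Kᶜ, x v
  have hab : ∑ v, x v = a + b := (sum_add_sum_compl K x).symm
  have hKa : (t + 1) * a = #K * (a + b) := by
    rw [mul_sum, sum_congr rfl hK, sum_const, nsmul_eq_mul, hab]
  have hKb : t * b = #Kᶜ * a := by
    rw [mul_sum, sum_congr rfl fun u hu => hKc u (mem_compl.mp hu), sum_const, nsmul_eq_mul]
  have ha : a ≠ 0 := by
    intro ha
    have hb : b = 0 := by simpa [ha, ht] using hKb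
    refine hx0 (funext fun u => ?_)
    by_cases hu : u ∈ K
    · simpa [hab, ha, hb, ht'] using hK u hu
    · simpa [ha, ht] using hKc u hu
  apply mul_right_cancel₀ ha
  linear_combination t * hKa + (#K : F) * hKb

theorem completeSplitGraph_mulVec_eq_smul {R : Type*} [CommRing R] {μ : R}
    (hμ : μ ^ 2 = (#K - 1) * μ + #K * #Kᶜ) :
    let x : V → R := fun u => if u ∈ K then (#Kᶜ : R) else μ - #K + 1
    (completeSplitGraph K).adjMatrix R *ᵥ x = μ • x := by
  intro x
  have hxK : ∑ v ∈ K, x v = #K * #Kᶜ := by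
    rw [sum_congr rfl fun v hv => if_pos hv, sum_const, nsmul_eq_mul]
  have hxKc : ∑ v ∈ Kᶜ, x v = #Kᶜ * (μ - #K + 1) := by
    rw [sum_congr rfl fun v hv => if_neg (mem_compl.mp hv), sum_const, nsmul_eq_mul]
  funext u
  by_cases hu : u ∈ K
  · rw [completeSplitGraph_adjMatrix_mulVec_of_mem x hu, ← sum_add_sum_compl K, hxK, hxKc]
    simp only [x, hu, if_true, Pi.smul_apply, smul_eq_mul]
    ring
  · rw [completeSplitGraph_adjMatrix_mulVec_of_notMem x hu, hxK]
    simp only [x, hu, if_false, Pi.smul_apply, smul_eq_mul]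
    linear_combination -hμ

theorem isGreatest_spectrum_completeSplitGraph (hK : Kᶜ.Nonempty) :
    IsGreatest (spectrum ℝ ((completeSplitGraph K).adjMatrix ℝ))
      ((#K - 1) / 2 + √((#K - 1) ^ 2 / 4 + #K * #Kᶜ)) := by
  set μ := ((#K : ℝ) - 1) / 2 + √((#K - 1) ^ 2 / 4 + #K * #Kᶜ)
  have hroot : μ ^ 2 = (#K - 1) * μ + #K * #Kᶜ := half_add_sqrt_sq_eq (by positivity)
  have hKμ : (#K : ℝ) ≤ μ := by
    have hm : (1 : ℝ) ≤ #Kᶜ := by exact_mod_cast hK.card_pos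
    have : ((#K : ℝ) + 1) / 2 ≤ √((#K - 1) ^ 2 / 4 + #K * #Kᶜ) :=
      Real.le_sqrt_of_sq_le (by nlinarith [Nat.cast_nonneg (α := ℝ) #K])
    simp only [μ]
    linarith
  refine ⟨(mem_spectrum_iff_exists_mulVec_eq_smul _ _).mpr
    ⟨_, fun h => ?_, completeSplitGraph_mulVec_eq_smul hroot⟩, fun t ht => ?_⟩
  · obtain ⟨u, hu⟩ := hK
    have := congrFun h u
    simp only [if_neg (mem_compl.mp hu), Pi.zero_apply] at this
    linarith
  · obtain ⟨x, hx0, hx⟩ := (mem_spectrum_iff_exists_mulVec_eq_smul _ _).mp ht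
    rcases le_or_gt t 0 with ht0 | ht0
    · linarith [Nat.cast_nonneg (α := ℝ) #K]
    · exact le_half_add_sqrt_of_sq_eq
        (completeSplitGraph_sq_eq_of_mulVec_eq_smul hx0 hx ht0.ne' (by linarith))

end CompleteSplitGraph

theorem stmt16 (n r : ℕ) (hrn : r < n) :
    graphEig (SimpleGraph.fromRel (fun u v : Fin n => (u : ℕ) < r ∨ (v : ℕ) < r))
        ⟨0, by omega⟩ =
      ((r : ℝ) - 1) / 2 +
        Real.sqrt ((n : ℝ) * r - (3 * (r : ℝ) ^ 2 + 2 * r - 1) / 4) := by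
  set K : Finset (Fin n) := {v | (v : ℕ) < r}
  have hK : #K = r := by rw [Fin.card_filter_val_lt, min_eq_right hrn.le]
  have hKc : #Kᶜ = n - r := by rw [card_compl, hK, Fintype.card_fin]
  have hG : fromRel (fun u v : Fin n => (u : ℕ) < r ∨ (v : ℕ) < r) = completeSplitGraph K := by
    ext u v
    simp [completeSplitGraph, K]
  rw [hG, graphEig_zero_eq_of_isGreatest _ _
    (isGreatest_spectrum_completeSplitGraph (card_pos.mp (by omega))), hK, hKc,
    Nat.cast_sub hrn.le]
  congr 2
  ring
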